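/- Every bitrade in τ-representation [τ₁, τ₂, τ₃] with |Γ| = 4 is τ-isomorphic to the τ-representation of the intercalate: on Γ = {1,2,3,4}, τ₁ = (1 2)(3 4), τ₂ = (1 3)(2 4), τ₃ = (1 4)(2 3). In particular, there is exactly one τ-isomorphism class of bitrades of size 4. -/

import Mathlib

/-- The set of points moved by a permutation. -/
def mov (σ : Equiv.Perm ℕ) : Set ℕ := {x | σ x ≠ x}

/-- The underlying set `Γ = mov(τ₁) ∪ mov(τ₂) ∪ mov(τ₃)` of a triple of permutations. -/
def Gam (τ : Fin 3 → Equiv.Perm ℕ) : Set ℕ := mov (τ 0) ∪ mov (τ 1) ∪ mov (τ 2)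

/-- A bitrade in τ-representation: a triple `[τ₁, τ₂, τ₃]` of permutations of the
finite set `Γ = mov(τ₁) ∪ mov(τ₂) ∪ mov(τ₃)` (all permutations composed left to
right) satisfying (T1) `τ₁τ₂τ₃ = 1`, (T2) any cycle of `τ_i` and any cycle of `τ_j`
(`i < j`) move at most one common point, and (T3) each `τ_i` is fixed-point-free
on `Γ`. -/
structure IsTauRep (τ : Fin 3 → Equiv.Perm ℕ) : Prop where
  fin : (Gam τ).Finite
  t1 : ∀ x, τ 2 (τ 1 (τ 0 x)) = x
  t2 : ∀ i j : Fin 3, i < j → ∀ x y : ℕ, x ≠ y →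
    ¬((τ i).SameCycle x y ∧ (τ j).SameCycle x y)
  t3 : ∀ i : Fin 3, ∀ x ∈ Gam τ, τ i x ≠ x

/-- The same-cycle setoid on the set of points moved by `σ`;
its classes are the (nontrivial) cycles of `σ`. -/
def cycSetoidOn (σ : Equiv.Perm ℕ) : Setoid (mov σ) :=
  ⟨fun a b => σ.SameCycle a.1 b.1,
    ⟨fun a => Equiv.Perm.SameCycle.refl σ a.1,
     fun h => h.symm, fun h h' => h.trans h'⟩⟩

/-- `zc σ` is the number of cycles of `σ`. -/
noncomputable def zc (σ : Equiv.Perm ℕ) : ℕ := Nat.card (Quotient (cycSetoidOn σ))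

/-- (T4): the group `⟨τ₁, τ₂, τ₃⟩` acts transitively on `Γ`. -/
def TransOn (τ : Fin 3 → Equiv.Perm ℕ) : Prop :=
  ∀ x ∈ Gam τ, ∀ y ∈ Gam τ,
    ∃ g ∈ Subgroup.closure ({τ 0, τ 1, τ 2} : Set (Equiv.Perm ℕ)), g x = y

/-- A spherical bitrade in τ-representation: (T4) holds and the genus defined by
Euler's formula `order = size + 2 - 2g` is zero. -/
def Spherical (τ : Fin 3 → Equiv.Perm ℕ) : Prop :=
  IsTauRep τ ∧ TransOn τ ∧
    zc (τ 0) + zc (τ 1) + zc (τ 2) = Nat.card (Gam τ) + 2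

/-- A bitrade in τ-representation is bicyclic if some `τ_j` has exactly two cycles. -/
def Bicyclic (τ : Fin 3 → Equiv.Perm ℕ) : Prop := ∃ j : Fin 3, zc (τ j) = 2

/-- The inverse `Z⁻¹ = [τ₁⁻¹, τ₂⁻¹, τ₂τ₁]` of a bitrade in τ-representation
(`τ₂τ₁`, composed left to right, is `τ 0 * τ 1` in Lean's convention). -/
def ZInv (τ : Fin 3 → Equiv.Perm ℕ) : Fin 3 → Equiv.Perm ℕ :=
  ![(τ 0)⁻¹, (τ 1)⁻¹, τ 0 * τ 1]

/-- `SlideRel τ x j u τ'` says that `τ'` is the result of the slide expansion of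
`τ` at the point `x ∈ Γ` in direction `j`, with new point `u ∉ Γ`.  Writing
`k = j+1`, `l = j+2`, `w = xτ_j`, `a = xτ_j⁻¹`, `b = wτ_j`, `z = xτ_k`,
`y = wτ_l⁻¹`, the preconditions are that the `τ_j`-cycle through `x` has length at
least 3 and that the `τ_k`-cycle through `x` and the `τ_l`-cycle through `w` have
no common point; the new permutations send `a ↦ u ↦ b`, `x ↦ w ↦ x` (direction `j`),
insert `u` after `x` (direction `k`) and insert `u` between `y` and `w`
(direction `l`), agreeing with the old ones elsewhere. -/
def SlideRel (τ : Fin 3 → Equiv.Perm ℕ) (x : ℕ) (j : Fin 3) (u : ℕ)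
    (τ' : Fin 3 → Equiv.Perm ℕ) : Prop :=
  x ∈ Gam τ ∧ u ∉ Gam τ ∧
  τ j x ≠ x ∧ τ j (τ j x) ≠ x ∧
  (∀ p : ℕ, (τ (j + 1)).SameCycle x p → (τ (j + 2)).SameCycle (τ j x) p → False) ∧
  (τ' j ((τ j)⁻¹ x) = u ∧ τ' j u = τ j (τ j x) ∧
    τ' j x = τ j x ∧ τ' j (τ j x) = x ∧
    ∀ p : ℕ, p ≠ (τ j)⁻¹ x → p ≠ u → p ≠ x → p ≠ τ j x → τ' j p = τ j p) ∧
  (τ' (j + 1) x = u ∧ τ' (j + 1) u = τ (j + 1) x ∧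
    ∀ p : ℕ, p ≠ x → p ≠ u → τ' (j + 1) p = τ (j + 1) p) ∧
  (τ' (j + 2) ((τ (j + 2))⁻¹ (τ j x)) = u ∧ τ' (j + 2) u = τ j x ∧
    ∀ p : ℕ, p ≠ (τ (j + 2))⁻¹ (τ j x) → p ≠ u → τ' (j + 2) p = τ (j + 2) p)

/-- The τ-representation of the intercalate, on `Γ = {1, 2, 3, 4} ⊆ ℕ`:
`τ₁ = (1 2)(3 4)`, `τ₂ = (1 3)(2 4)`, `τ₃ = (1 4)(2 3)`. -/
def intercalateRep : Fin 3 → Equiv.Perm ℕ :=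
  ![Equiv.swap 1 2 * Equiv.swap 3 4,
    Equiv.swap 1 3 * Equiv.swap 2 4,
    Equiv.swap 1 4 * Equiv.swap 2 3]

/-!
For `x ∈ Γ` the points `x, xτ₁, xτ₂, xτ₃` are pairwise distinct: two of them coinciding would put
two distinct points in a common cycle of two different `τ_i`. So when `|Γ| = 4` they exhaust `Γ`.
The same argument forces each `τ_i` to be an involution and fixes the rest of the table,
`xτ_jτ_i = xτ_k` for `{i, j, k} = {1, 2, 3}`. Hence, for two bitrades `τ`, `ν` of size 4, any
bijection sending `a ↦ b` and `aτ_i ↦ bν_i` is a τ-isomorphism; and the intercalate is a bitrade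
of size 4.
-/

theorem Equiv.Perm.SameCycle.eq_or_eq_apply_of_involutive {α : Type*} {σ : Equiv.Perm α}
    (hσ : Function.Involutive σ) {x y : α} (h : σ.SameCycle x y) : y = x ∨ y = σ x := by
  have hsq : σ ^ 2 = 1 := Equiv.ext hσ
  obtain ⟨n, rfl⟩ := h
  rw [zpow_eq_zpow_emod' n hsq]
  rcases Int.emod_two_eq_zero_or_one n with hn | hn <;> simp [hn]

lemma Fin.exists_ne_and_ne (i j : Fin 3) : ∃ k, i ≠ k ∧ j ≠ k := by
  revert i j; decide

def starOf (τ : Fin 3 → Equiv.Perm ℕ) (a : ℕ) : Option (Fin 3) → ℕ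
  | none => a
  | some i => τ i a

lemma mov_subset_gam (τ : Fin 3 → Equiv.Perm ℕ) (i : Fin 3) : mov (τ i) ⊆ Gam τ := by
  intro x hx
  fin_cases i
  · exact Or.inl (Or.inl hx)
  · exact Or.inl (Or.inr hx)
  · exact Or.inr hx

lemma apply_eq_self_of_notMem_gam {τ : Fin 3 → Equiv.Perm ℕ} {x : ℕ} (hx : x ∉ Gam τ)
    (i : Fin 3) : τ i x = x :=
  not_not.mp fun h => hx (mov_subset_gam τ i h)

namespace IsTauRep

variable {τ : Fin 3 → Equiv.Perm ℕ} (h : IsTauRep τ)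
include h

lemma apply_mem_gam {x : ℕ} (hx : x ∈ Gam τ) (i : Fin 3) : τ i x ∈ Gam τ :=
  mov_subset_gam τ i fun he => h.t3 i x hx ((τ i).injective he)

lemma not_sameCycle_of_sameCycle {i j : Fin 3} (hij : i ≠ j) {x y : ℕ} (hxy : x ≠ y)
    (hi : (τ i).SameCycle x y) : ¬(τ j).SameCycle x y := fun hj => by
  rcases hij.lt_or_gt with hlt | hgt
  · exact h.t2 i j hlt x y hxy ⟨hi, hj⟩
  · exact h.t2 j i hgt x y hxy ⟨hj, hi⟩

lemma apply_ne_apply {i j : Fin 3} (hij : i ≠ j) {x : ℕ} (hx : x ∈ Gam τ) :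
    τ i x ≠ τ j x := fun he =>
  h.not_sameCycle_of_sameCycle hij (h.t3 i x hx).symm ⟨1, by simp⟩ ⟨1, by simp [he]⟩

lemma apply_apply_ne_apply {i j : Fin 3} (hij : i ≠ j) {x : ℕ} (hx : x ∈ Gam τ) :
    τ i (τ i x) ≠ τ j x := fun he =>
  h.not_sameCycle_of_sameCycle hij (h.t3 j x hx).symm ⟨2, by simp [sq, he]⟩ ⟨1, by simp⟩

lemma starOf_injective {a : ℕ} (ha : a ∈ Gam τ) : Function.Injective (starOf τ a) := by
  rintro (_ | i) (_ | j) he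
  · rfl
  · exact absurd he.symm (h.t3 j a ha)
  · exact absurd he (h.t3 i a ha)
  · by_contra hij
    exact h.apply_ne_apply (fun hij' => hij (congrArg some hij')) ha he

lemma range_starOf_subset {a : ℕ} (ha : a ∈ Gam τ) : Set.range (starOf τ a) ⊆ Gam τ := by
  rintro _ ⟨_ | i, rfl⟩
  · exact ha
  · exact h.apply_mem_gam ha i

variable (hcard : Nat.card (Gam τ) = 4)
include hcard

lemma gam_eq_range_starOf {a : ℕ} (ha : a ∈ Gam τ) : Gam τ = Set.range (starOf τ a) := by
  refine (Set.eq_of_subset_of_ncard_le (h.range_starOf_subset ha) ?_ h.fin).symm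
  rw [← Nat.card_coe_set_eq, hcard, ← Nat.card_coe_set_eq, Nat.card_range_of_injective
    (h.starOf_injective ha)]
  simp

lemma apply_apply_self {x : ℕ} (hx : x ∈ Gam τ) (i : Fin 3) : τ i (τ i x) = x := by
  obtain ⟨_ | j, hj⟩ : τ i (τ i x) ∈ Set.range (starOf τ x) :=
    h.gam_eq_range_starOf hcard hx ▸ h.apply_mem_gam (h.apply_mem_gam hx i) i
  · exact hj.symm
  · refine absurd hj.symm ?_
    rcases eq_or_ne i j with rfl | hij
    · exact h.t3 i _ (h.apply_mem_gam hx i)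
    · exact h.apply_apply_ne_apply hij hx

lemma apply_apply_of_ne {a : ℕ} (ha : a ∈ Gam τ) {i j k : Fin 3} (hij : i ≠ j) (hik : i ≠ k)
    (hjk : j ≠ k) : τ i (τ j a) = τ k a := by
  obtain ⟨_ | l, hl⟩ : τ i (τ j a) ∈ Set.range (starOf τ a) :=
    h.gam_eq_range_starOf hcard ha ▸ h.apply_mem_gam (h.apply_mem_gam ha j) i
  · have hl : a = τ i (τ j a) := hl
    refine absurd ?_ (h.apply_ne_apply hij ha)
    calc τ i a = τ i (τ i (τ j a)) := by rw [← hl]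
      _ = τ j a := h.apply_apply_self hcard (h.apply_mem_gam ha j) i
  · have hl : τ l a = τ i (τ j a) := hl
    obtain rfl | rfl | rfl : l = i ∨ l = j ∨ l = k := by omega
    · exact absurd ((τ l).injective hl) (h.t3 j a ha).symm
    · exact absurd hl.symm (h.t3 i _ (h.apply_mem_gam ha l))
    · exact hl.symm

end IsTauRep

theorem IsTauRep.conj_eq_of_starOf {τ ν : Fin 3 → Equiv.Perm ℕ} (hτ : IsTauRep τ)
    (hν : IsTauRep ν) (hcτ : Nat.card (Gam τ) = 4) (hcν : Nat.card (Gam ν) = 4) {a b : ℕ}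
    (ha : a ∈ Gam τ) (hb : b ∈ Gam ν) {θ : Equiv.Perm ℕ}
    (hθ : ∀ o, θ (starOf τ a o) = starOf ν b o) (i : Fin 3) : θ * τ i * θ⁻¹ = ν i := by
  have hθa : θ a = b := hθ none
  have hθs (j : Fin 3) : θ (τ j a) = ν j b := hθ (some j)
  rw [mul_inv_eq_iff_eq_mul]
  ext x
  change θ (τ i x) = ν i (θ x)
  by_cases hx : x ∈ Gam τ
  · rw [hτ.gam_eq_range_starOf hcτ ha] at hx
    obtain ⟨_ | j, rfl⟩ := hx <;> dsimp only [starOf]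
    · rw [hθa, hθs]
    · rw [hθs]
      rcases eq_or_ne i j with rfl | hij
      · rw [hτ.apply_apply_self hcτ ha, hν.apply_apply_self hcν hb, hθa]
      · obtain ⟨k, hik, hjk⟩ := Fin.exists_ne_and_ne i j
        rw [hτ.apply_apply_of_ne hcτ ha hij hik hjk, hν.apply_apply_of_ne hcν hb hij hik hjk, hθs]
  · have hθx : θ x ∉ Gam ν := by
      rw [hν.gam_eq_range_starOf hcν hb]
      rintro ⟨o, ho⟩
      exact hx (hτ.range_starOf_subset ha ⟨o, θ.injective ((hθ o).trans ho)⟩)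
    rw [apply_eq_self_of_notMem_gam hx, apply_eq_self_of_notMem_gam hθx]

theorem IsTauRep.exists_conj_eq {τ ν : Fin 3 → Equiv.Perm ℕ} (hτ : IsTauRep τ)
    (hν : IsTauRep ν) (hcτ : Nat.card (Gam τ) = 4) (hcν : Nat.card (Gam ν) = 4) :
    ∃ θ : Equiv.Perm ℕ, ∀ i, θ * τ i * θ⁻¹ = ν i := by
  obtain ⟨a, ha⟩ : (Gam τ).Nonempty :=
    Set.nonempty_of_ncard_ne_zero (by rw [← Nat.card_coe_set_eq]; omega)
  obtain ⟨b, hb⟩ : (Gam ν).Nonempty :=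
    Set.nonempty_of_ncard_ne_zero (by rw [← Nat.card_coe_set_eq]; omega)
  obtain ⟨θ, hθ⟩ := Equiv.Perm.exists_extending_pair _ _ (hτ.starOf_injective ha)
    (hν.starOf_injective hb)
  exact ⟨θ, hτ.conj_eq_of_starOf hν hcτ hcν ha hb hθ⟩

lemma intercalateRep_apply_of_notMem {x : ℕ} (hx : x ∉ ({1, 2, 3, 4} : Finset ℕ))
    (i : Fin 3) : intercalateRep i x = x := by
  simp only [Finset.mem_insert, Finset.mem_singleton, not_or] at hx
  fin_cases i <;> simp [intercalateRep, Equiv.swap_apply_of_ne_of_ne, hx]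

lemma intercalateRep_apply_ne_self :
    ∀ i : Fin 3, ∀ x ∈ ({1, 2, 3, 4} : Finset ℕ), intercalateRep i x ≠ x := by
  decide

lemma intercalateRep_apply_ne_apply :
    ∀ i j : Fin 3, i < j → ∀ x ∈ ({1, 2, 3, 4} : Finset ℕ),
      intercalateRep i x ≠ intercalateRep j x := by
  decide

lemma intercalateRep_involutive (i : Fin 3) : Function.Involutive (intercalateRep i) := by
  intro x
  by_cases hx : x ∈ ({1, 2, 3, 4} : Finset ℕ)
  · revert x i; decide
  · rw [intercalateRep_apply_of_notMem hx, intercalateRep_apply_of_notMem hx]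

lemma gam_intercalateRep : Gam intercalateRep = {1, 2, 3, 4} := by
  ext x
  by_cases hx : x ∈ ({1, 2, 3, 4} : Finset ℕ)
  · exact iff_of_true (Or.inl (Or.inl (intercalateRep_apply_ne_self 0 x hx))) (by simpa using hx)
  · refine iff_of_false ?_ (by simpa using hx)
    simp [Gam, mov, intercalateRep_apply_of_notMem hx]

lemma isTauRep_intercalateRep : IsTauRep intercalateRep where
  fin := gam_intercalateRep ▸ Set.toFinite _
  t1 x := by
    by_cases hx : x ∈ ({1, 2, 3, 4} : Finset ℕ)
    · revert x; decide
    · simp only [intercalateRep_apply_of_notMem hx]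
  t2 i j hij x y hxy := by
    rintro ⟨hi, hj⟩
    obtain rfl | rfl := hi.eq_or_eq_apply_of_involutive (intercalateRep_involutive i)
    · exact hxy rfl
    obtain he | he := hj.eq_or_eq_apply_of_involutive (intercalateRep_involutive j)
    · exact hxy he.symm
    by_cases hx : x ∈ ({1, 2, 3, 4} : Finset ℕ)
    · exact intercalateRep_apply_ne_apply i j hij x hx he
    · exact hxy (intercalateRep_apply_of_notMem hx i).symm
  t3 i x hx := intercalateRep_apply_ne_self i x (by simpa [gam_intercalateRep] using hx)

lemma card_gam_intercalateRep : Nat.card (Gam intercalateRep) = 4 := by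
  rw [gam_intercalateRep, Nat.card_coe_set_eq]
  simp [Set.ncard_insert_of_notMem]

/-- The intercalate representation is a bitrade in
τ-representation on `{1, 2, 3, 4}`, and every bitrade in τ-representation with
`|Γ| = 4` is τ-isomorphic to it.  In particular there is exactly one τ-isomorphism
class of bitrades of size 4. -/
theorem size_four_is_intercalate :
    IsTauRep intercalateRep ∧
    Gam intercalateRep = {1, 2, 3, 4} ∧
    ∀ τ : Fin 3 → Equiv.Perm ℕ, IsTauRep τ → Nat.card (Gam τ) = 4 →
      ∃ θ : Equiv.Perm ℕ, ∀ i : Fin 3, θ * τ i * θ⁻¹ = intercalateRep i :=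
  ⟨isTauRep_intercalateRep, gam_intercalateRep, fun _ hτ hcard =>
    hτ.exists_conj_eq isTauRep_intercalateRep hcard card_gam_intercalateRep⟩
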